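/- (Tightness of the supporting plane.) For any 0 ≤ ρ < 1 and η ≥ 0 such that E₀^t(ρ, η, Q̃W̃) is finite, there exist R ≥ 0 and α ≥ min_x f(x) such that E_c^t(Q̃W̃, R, α) = E₀^t(ρ, η, Q̃W̃) + ρR − ηα. -/

import Mathlib

open scoped BigOperators
open Filter Topology

/-- A joint probability distribution on `X × Y`, given by a nonnegative
pmf `p` summing to one. -/
structure JointDist (X Y : Type) [Fintype X] [Fintype Y] where
  p : X → Y → ℝ
  nonneg : ∀ x y, 0 ≤ p x y
  sum_one : ∑ x : X, ∑ y : Y, p x y = 1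

namespace JointDist

variable {X Y : Type} [Fintype X] [Fintype Y]

/-- `X`-marginal `Q`. -/
noncomputable def Qm (μ : JointDist X Y) (x : X) : ℝ := ∑ y : Y, μ.p x y

/-- `Y`-marginal `T`. -/
noncomputable def Tm (μ : JointDist X Y) (y : Y) : ℝ := ∑ x : X, μ.p x y

/-- Conditional distribution `W(y|x)`. -/
noncomputable def Wc (μ : JointDist X Y) (x : X) (y : Y) : ℝ :=
  if μ.Qm x = 0 then 0 else μ.p x y / μ.Qm x

/-- Conditional distribution `V(x|y)`. -/
noncomputable def Vc (μ : JointDist X Y) (y : Y) (x : X) : ℝ :=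
  if μ.Tm y = 0 then 0 else μ.p x y / μ.Tm y

end JointDist

/-- Kullback–Leibler divergence `D(p‖q)` between finite nonnegative vectors,
valued in `EReal`, with the conventions `0 log 0 = 0` and `D = ⊤` if
absolute continuity fails. -/
noncomputable def relEnt {Z : Type} [Fintype Z] (p q : Z → ℝ) : EReal :=
  if ∀ z, q z = 0 → p z = 0 then
    (((∑ z : Z, if p z = 0 then 0 else p z * Real.log (p z / q z)) : ℝ) : EReal)
  else ⊤

/-- Conditional KL divergence `D(w‖w'|q) = ∑_a q(a) D(w(·|a)‖w'(·|a))`,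
valued in `EReal` with the usual conventions. -/
noncomputable def condRelEnt {A B : Type} [Fintype A] [Fintype B]
    (q : A → ℝ) (w w' : A → B → ℝ) : EReal :=
  if ∀ a b, q a ≠ 0 → w' a b = 0 → w a b = 0 then
    (((∑ a : A, ∑ b : B, if q a * w a b = 0 then 0
        else q a * w a b * Real.log (w a b / w' a b)) : ℝ) : EReal)
  else ⊤

variable {X Y : Type}

/-- The weighted divergence combination
`D^t(QW, Q'W') = t₁ D(Q‖Q') + t₂ D(W‖W'|Q) + t₃ D(T‖T') + t₄ D(V‖V'|T)`. -/
noncomputable def Dt [Fintype X] [Fintype Y] (t : Fin 4 → ℝ)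
    (μ ν : JointDist X Y) : EReal :=
  (t 0 : EReal) * relEnt μ.Qm ν.Qm + (t 1 : EReal) * condRelEnt μ.Qm μ.Wc ν.Wc +
  (t 2 : EReal) * relEnt μ.Tm ν.Tm + (t 3 : EReal) * condRelEnt μ.Tm μ.Vc ν.Vc

/-- `D(W‖P|Q)` for the channel `P`. -/
noncomputable def condDivP [Fintype X] [Fintype Y] (P : X → Y → ℝ)
    (μ : JointDist X Y) : EReal :=
  condRelEnt μ.Qm μ.Wc P

/-- Mutual information `I(Q,W)` of the joint law `QW`. -/
noncomputable def mutInfo [Fintype X] [Fintype Y] (μ : JointDist X Y) : ℝ :=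
  ∑ x : X, ∑ y : Y, if μ.p x y = 0 then 0
    else μ.p x y * Real.log (μ.p x y / (μ.Qm x * μ.Tm y))

/-- Expected cost `E_Q[f(X)]`. -/
noncomputable def expCost [Fintype X] [Fintype Y] (f : X → ℝ)
    (μ : JointDist X Y) : ℝ :=
  ∑ x : X, μ.Qm x * f x

/-- `F₁^t(QW, Q̃W̃) = D(W‖P|Q) + D^t(QW, Q̃W̃)`. -/
noncomputable def F1 [Fintype X] [Fintype Y] (P : X → Y → ℝ) (t : Fin 4 → ℝ)
    (μ ν : JointDist X Y) : EReal :=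
  condDivP P μ + Dt t μ ν

/-- `F₂(QW, R) = D(W‖P|Q) − I(Q,W) + R`. -/
noncomputable def F2 [Fintype X] [Fintype Y] (P : X → Y → ℝ) (R : ℝ)
    (μ : JointDist X Y) : EReal :=
  condDivP P μ - ((mutInfo μ : ℝ) : EReal) + ((R : ℝ) : EReal)

/-- `F^t(QW, Q̃W̃, R) = max{F₁^t(QW, Q̃W̃), F₂(QW, R)}`. -/
noncomputable def Fr [Fintype X] [Fintype Y] (P : X → Y → ℝ) (t : Fin 4 → ℝ)
    (R : ℝ) (μ ν : JointDist X Y) : EReal :=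
  max (F1 P t μ ν) (F2 P R μ)

/-- `E_c^t(Q̃W̃, R, α)`: the constrained minimum of `F^t(·, Q̃W̃, R)`. -/
noncomputable def Ec [Fintype X] [Fintype Y] (P : X → Y → ℝ) (t : Fin 4 → ℝ)
    (f : X → ℝ) (R α : ℝ) (ν : JointDist X Y) : EReal :=
  sInf ((fun μ => Fr P t R μ ν) '' {μ : JointDist X Y | expCost f μ ≤ α})

/-- `F^t(ρ, η, QW, Q̃W̃) = D(W‖P|Q) − ρ I(Q,W) + η E_Q[f] + (1−ρ) D^t(QW, Q̃W̃)`. -/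
noncomputable def Fslope [Fintype X] [Fintype Y] (P : X → Y → ℝ) (t : Fin 4 → ℝ)
    (f : X → ℝ) (ρ η : ℝ) (μ ν : JointDist X Y) : EReal :=
  condDivP P μ - ((ρ * mutInfo μ : ℝ) : EReal) + ((η * expCost f μ : ℝ) : EReal)
    + ((1 - ρ : ℝ) : EReal) * Dt t μ ν

/-- `E₀^t(ρ, η, Q̃W̃)`: the unconstrained minimum of `F^t(ρ, η, ·, Q̃W̃)`. -/
noncomputable def E0 [Fintype X] [Fintype Y] (P : X → Y → ℝ) (t : Fin 4 → ℝ)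
    (f : X → ℝ) (ρ η : ℝ) (ν : JointDist X Y) : EReal :=
  sInf (Set.range (fun μ : JointDist X Y => Fslope P t f ρ η μ ν))

/-!
Write `F` for the objective of `E₀^t` and `F₁`, `F₂` for the two branches of the max in `E_c^t`.
For `0 ≤ ρ ≤ 1` we have `max {F₁, F₂} ≥ (1 - ρ) F₁ + ρ F₂ = F + ρ R - η E_Q[f]`, so on
`{E_Q[f] ≤ α}` this gives `E_c^t ≥ E₀^t + ρ R - η α` for every `R` and `α`. For equality take a
minimiser `Q*W*` of `F`, `R = I(Q*, W*) + D^t(Q*W*, Q̃W̃)` and `α = E_{Q*}[f]`: then `F₁ = F₂` at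
`Q*W*`, and their common value is `E₀^t + ρ R - η α`. The minimiser exists because `F`, as a
function of the joint pmf on the compact simplex, is lower semicontinuous: every divergence is a
sum of terms `a log (a / b)`, each a supremum of affine functions of `(a, b)`.
-/

open Real

/-- `a log (a / b)` as the supremum of the affine functions `s a - e^{s-1} b`; this makes it lower
semicontinuous in `(a, b)`, also at `b = 0` where it jumps to `⊤`. -/
noncomputable def klTerm (a b : ℝ) : EReal :=
  ⨆ s : ℝ, ((s * a - b * exp (s - 1) : ℝ) : EReal)

lemma lowerSemicontinuous_klTerm : LowerSemicontinuous fun p : ℝ × ℝ => klTerm p.1 p.2 :=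
  lowerSemicontinuous_iSup fun _ =>
    (continuous_coe_real_ereal.comp (by fun_prop)).lowerSemicontinuous

lemma klTerm_ne_bot (a b : ℝ) : klTerm a b ≠ ⊥ :=
  ne_bot_of_le_ne_bot (EReal.coe_ne_bot _)
    (le_iSup (fun s : ℝ => ((s * a - b * exp (s - 1) : ℝ) : EReal)) 0)

lemma klTerm_zero_left {b : ℝ} (hb : 0 ≤ b) : klTerm 0 b = 0 := by
  refine le_antisymm (iSup_le fun s => ?_) ?_
  · exact_mod_cast (by nlinarith [exp_pos (s - 1)] : s * 0 - b * exp (s - 1) ≤ 0)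
  · have hlim : Tendsto (fun s : ℝ => s * 0 - b * exp (s - 1)) atBot (𝓝 0) := by
      simpa [sub_eq_add_neg] using
        ((tendsto_exp_atBot.comp (tendsto_atBot_add_const_right _ (-1) tendsto_id)).const_mul b).neg
    exact le_of_tendsto' ((continuous_coe_real_ereal.tendsto 0).comp hlim) fun s =>
      le_iSup_of_le s le_rfl

lemma klTerm_zero_right {a : ℝ} (ha : 0 < a) : klTerm a 0 = ⊤ := by
  refine EReal.eq_top_iff_forall_lt _ |>.mpr fun y => lt_iSup_iff.mpr ⟨(y + 1) / a, ?_⟩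
  have : (y + 1) / a * a = y + 1 := div_mul_cancel₀ _ ha.ne'
  exact_mod_cast (by simp [this] : y < (y + 1) / a * a - 0 * exp ((y + 1) / a - 1))

lemma klTerm_of_pos {a b : ℝ} (ha : 0 < a) (hb : 0 < b) :
    klTerm a b = ((a * log (a / b) : ℝ) : EReal) := by
  refine le_antisymm (iSup_le fun s => ?_) (le_iSup_of_le (1 + log (a / b)) ?_)
  · have hexp : b * exp (s - 1) = a * exp (s - 1 - log (a / b)) := by
      rw [exp_sub _ (log _), exp_log (div_pos ha hb)]; field_simp
    have := add_one_le_exp (s - 1 - log (a / b))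
    exact_mod_cast (by rw [hexp]; nlinarith : s * a - b * exp (s - 1) ≤ a * log (a / b))
  · have : b * exp (1 + log (a / b) - 1) = a := by
      rw [add_sub_cancel_left, exp_log (div_pos ha hb)]; field_simp
    exact EReal.coe_le_coe_iff.mpr (le_of_eq (by rw [this]; ring))

section EReal

variable {α ι : Type*}

lemma LowerSemicontinuous.ereal_add [TopologicalSpace α] {f g : α → EReal}
    (hf : LowerSemicontinuous f) (hg : LowerSemicontinuous g) :
    LowerSemicontinuous fun x => f x + g x := by
  intro x
  by_cases hfx : f x = ⊥
  · intro y hy; simp [hfx] at hy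
  by_cases hgx : g x = ⊥
  · intro y hy; simp [hgx] at hy
  exact LowerSemicontinuousAt.add' (hf x) (hg x) (EReal.continuousAt_add (.inr hgx) (.inl hfx))

lemma lowerSemicontinuous_ereal_sum [TopologicalSpace α] (s : Finset ι) {F : ι → α → EReal}
    (hF : ∀ i ∈ s, LowerSemicontinuous (F i)) :
    LowerSemicontinuous fun x => ∑ i ∈ s, F i x := by
  classical
  induction s using Finset.induction_on with
  | empty => simpa using lowerSemicontinuous_const
  | insert a s ha ih =>
    simp only [Finset.sum_insert ha]
    exact (hF a (by simp)).ereal_add (ih fun i hi => hF i (by simp [hi]))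

lemma EReal.sum_ne_bot {s : Finset ι} {F : ι → EReal} (h : ∀ i ∈ s, F i ≠ ⊥) :
    ∑ i ∈ s, F i ≠ ⊥ := by
  classical
  induction s using Finset.induction_on with
  | empty => simp
  | insert a s ha ih =>
    rw [Finset.sum_insert ha]
    exact EReal.add_ne_bot_iff.mpr ⟨h a (by simp), ih fun i hi => h i (by simp [hi])⟩

lemma EReal.coe_finsetSum (s : Finset ι) (r : ι → ℝ) :
    ((∑ i ∈ s, r i : ℝ) : EReal) = ∑ i ∈ s, (r i : EReal) :=
  map_sum (⟨⟨Real.toEReal, EReal.coe_zero⟩, EReal.coe_add⟩ : ℝ →+ EReal) r s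

end EReal

section RelEnt

variable {Z : Type} [Fintype Z]

lemma sub_le_klSummand {p q : ℝ} (hp : 0 ≤ p) (hq : 0 ≤ q) (hpq : q = 0 → p = 0) :
    p - q ≤ if p = 0 then 0 else p * log (p / q) := by
  split_ifs with h
  · linarith
  · have hp' : 0 < p := hp.lt_of_ne' h
    have hq' : 0 < q := hq.lt_of_ne' fun h' => h (hpq h')
    have := mul_le_mul_of_nonneg_left (one_sub_inv_le_log_of_pos (div_pos hp' hq')) hp
    rwa [inv_div, mul_sub, mul_one, mul_div_cancel₀ _ hp'.ne'] at this

lemma relEnt_nonneg {p q : Z → ℝ} (hp : ∀ z, 0 ≤ p z) (hq : ∀ z, 0 ≤ q z)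
    (hsum : ∑ z, q z ≤ ∑ z, p z) : 0 ≤ relEnt p q := by
  unfold relEnt
  split_ifs with hac
  · refine EReal.coe_nonneg.mpr ?_
    calc (0 : ℝ) ≤ ∑ z, (p z - q z) := by rw [Finset.sum_sub_distrib]; linarith
      _ ≤ _ := Finset.sum_le_sum fun z _ => sub_le_klSummand (hp z) (hq z) (hac z)
  · exact le_top

lemma sum_klTerm_eq_relEnt {p q : Z → ℝ} (hp : ∀ z, 0 ≤ p z) (hq : ∀ z, 0 ≤ q z) :
    ∑ z, klTerm (p z) (q z) = relEnt p q := by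
  unfold relEnt
  split_ifs with hac
  · rw [EReal.coe_finsetSum]
    refine Finset.sum_congr rfl fun z _ => ?_
    rcases (hp z).eq_or_lt with h | h
    · simp [← h, klTerm_zero_left (hq z)]
    · rw [klTerm_of_pos h ((hq z).lt_of_ne' fun h' => h.ne' (hac z h')), if_neg h.ne']
  · classical
    obtain ⟨z, hqz, hpz⟩ := not_forall₂.mp hac
    rw [← Finset.add_sum_erase _ _ (Finset.mem_univ z), hqz,
      klTerm_zero_right ((hp z).lt_of_ne' hpz)]
    exact EReal.top_add_of_ne_bot (EReal.sum_ne_bot fun i _ => klTerm_ne_bot _ _)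

lemma relEnt_const_mul {c : ℝ} (hc : 0 < c) (p q : Z → ℝ) :
    relEnt (fun z => c * p z) (fun z => c * q z) = c * relEnt p q := by
  have hac : (∀ z, c * q z = 0 → c * p z = 0) ↔ ∀ z, q z = 0 → p z = 0 := by
    simp [hc.ne']
  unfold relEnt
  split_ifs with h₁ h₂ h₂
  · rw [← EReal.coe_mul, Finset.mul_sum]
    refine congrArg _ (Finset.sum_congr rfl fun z _ => ?_)
    by_cases hz : p z = 0
    · simp [hz]
    · simp only [hz, hc.ne', mul_eq_zero, or_self, if_false, mul_div_mul_left _ _ hc.ne']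
      ring
  · exact absurd (hac.mp h₁) h₂
  · exact absurd (hac.mpr h₂) h₁
  · exact (EReal.coe_mul_top_of_pos hc).symm

lemma sum_klTerm_const_mul {c : ℝ} (hc : 0 ≤ c) {p q : Z → ℝ} (hp : ∀ z, 0 ≤ p z)
    (hq : ∀ z, 0 ≤ q z) : ∑ z, klTerm (c * p z) (c * q z) = c * relEnt p q := by
  rcases hc.eq_or_lt with rfl | hc
  · simp [klTerm_zero_left le_rfl]
  · rw [sum_klTerm_eq_relEnt (fun z => mul_nonneg hc.le (hp z))
      (fun z => mul_nonneg hc.le (hq z)), relEnt_const_mul hc]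

end RelEnt

section CondRelEnt

variable {A B : Type} [Fintype A] [Fintype B]

lemma condRelEnt_eq_relEnt {m : A → B → ℝ} (hm : ∀ a b, 0 ≤ m a b) (w' : A → B → ℝ) :
    condRelEnt (fun a => ∑ b, m a b)
      (fun a b => if ∑ b', m a b' = 0 then 0 else m a b / ∑ b', m a b') w'
    = relEnt (fun z : A × B => m z.1 z.2) (fun z => (∑ b', m z.1 b') * w' z.1 z.2) := by
  have hrow : ∀ a b, ∑ b', m a b' = 0 → m a b = 0 := fun a b h =>
    (Finset.sum_eq_zero_iff_of_nonneg fun b' _ => hm a b').mp h b (Finset.mem_univ b)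
  have hac : (∀ a b, ∑ b', m a b' ≠ 0 → w' a b = 0 →
        (if ∑ b', m a b' = 0 then 0 else m a b / ∑ b', m a b') = 0) ↔
      ∀ z : A × B, (∑ b', m z.1 b') * w' z.1 z.2 = 0 → m z.1 z.2 = 0 := by
    refine ⟨fun h ⟨a, b⟩ hz => ?_, fun h a b hQ hw => ?_⟩
    · by_cases hQ : ∑ b', m a b' = 0
      · exact hrow a b hQ
      · have := h a b hQ ((mul_eq_zero.mp hz).resolve_left hQ)
        rwa [if_neg hQ, div_eq_zero_iff, or_iff_left hQ] at this
    · simp [hQ, h (a, b) (by simp [hw])]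
  unfold condRelEnt relEnt
  by_cases h : ∀ z : A × B, (∑ b', m z.1 b') * w' z.1 z.2 = 0 → m z.1 z.2 = 0
  · rw [if_pos (hac.mpr h), if_pos h, Fintype.sum_prod_type]
    refine congrArg _ (Finset.sum_congr rfl fun a _ => Finset.sum_congr rfl fun b _ => ?_)
    by_cases hQ : ∑ b', m a b' = 0
    · simp [hQ, hrow a b hQ]
    · by_cases hmab : m a b = 0
      · simp [hmab]
      · simp only [if_neg hQ, mul_div_cancel₀ _ hQ, if_neg hmab, div_div]
  · rw [if_neg (fun h' => h (hac.mp h')), if_neg h]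

lemma condRelEnt_nonneg {m : A → B → ℝ} (hm : ∀ a b, 0 ≤ m a b) {w' : A → B → ℝ}
    (hw' : ∀ a b, 0 ≤ w' a b) (hw'sum : ∀ a, ∑ b, w' a b ≤ 1) :
    0 ≤ condRelEnt (fun a => ∑ b, m a b)
      (fun a b => if ∑ b', m a b' = 0 then 0 else m a b / ∑ b', m a b') w' := by
  have hrow : ∀ a, 0 ≤ ∑ b, m a b := fun a => Finset.sum_nonneg fun b _ => hm a b
  rw [condRelEnt_eq_relEnt hm]
  refine relEnt_nonneg (fun z => hm z.1 z.2) (fun z => mul_nonneg (hrow z.1) (hw' z.1 z.2)) ?_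
  simp only [Fintype.sum_prod_type, ← Finset.mul_sum]
  exact Finset.sum_le_sum fun a _ => mul_le_of_le_one_right (hrow a) (hw'sum a)

end CondRelEnt

namespace JointDist

variable [Fintype X] [Fintype Y] (μ : JointDist X Y)

lemma Qm_nonneg (x : X) : 0 ≤ μ.Qm x := Finset.sum_nonneg fun y _ => μ.nonneg x y

lemma Tm_nonneg (y : Y) : 0 ≤ μ.Tm y := Finset.sum_nonneg fun x _ => μ.nonneg x y

lemma sum_Qm : ∑ x, μ.Qm x = 1 := μ.sum_one

lemma sum_Tm : ∑ y, μ.Tm y = 1 := by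
  rw [← μ.sum_one]; exact Finset.sum_comm

lemma p_le_Qm (x : X) (y : Y) : μ.p x y ≤ μ.Qm x :=
  Finset.single_le_sum (fun y' _ => μ.nonneg x y') (Finset.mem_univ y)

lemma p_le_Tm (x : X) (y : Y) : μ.p x y ≤ μ.Tm y :=
  Finset.single_le_sum (fun x' _ => μ.nonneg x' y) (Finset.mem_univ x)

lemma Wc_nonneg (x : X) (y : Y) : 0 ≤ μ.Wc x y := by
  unfold Wc; split_ifs
  exacts [le_rfl, div_nonneg (μ.nonneg x y) (μ.Qm_nonneg x)]

lemma Vc_nonneg (y : Y) (x : X) : 0 ≤ μ.Vc y x := by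
  unfold Vc; split_ifs
  exacts [le_rfl, div_nonneg (μ.nonneg x y) (μ.Tm_nonneg y)]

lemma sum_Wc_le_one (x : X) : ∑ y, μ.Wc x y ≤ 1 := by
  unfold Wc; split_ifs with h
  · simp
  · exact (Finset.sum_div _ _ _).symm.trans_le (div_self h).le

lemma sum_Vc_le_one (y : Y) : ∑ x, μ.Vc y x ≤ 1 := by
  unfold Vc; split_ifs with h
  · simp
  · exact (Finset.sum_div _ _ _).symm.trans_le (div_self h).le

lemma condRelEnt_Wc (w' : X → Y → ℝ) :
    condRelEnt μ.Qm μ.Wc w'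
      = relEnt (fun z : X × Y => μ.p z.1 z.2) (fun z => μ.Qm z.1 * w' z.1 z.2) :=
  condRelEnt_eq_relEnt μ.nonneg w'

lemma condRelEnt_Vc (v' : Y → X → ℝ) :
    condRelEnt μ.Tm μ.Vc v'
      = relEnt (fun z : Y × X => μ.p z.2 z.1) (fun z => μ.Tm z.1 * v' z.1 z.2) :=
  condRelEnt_eq_relEnt (fun y x => μ.nonneg x y) v'

lemma Dt_nonneg {t : Fin 4 → ℝ} (ht : ∀ i, 0 ≤ t i) (ν : JointDist X Y) : 0 ≤ Dt t μ ν := by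
  have ht' : ∀ i, (0 : EReal) ≤ t i := fun i => EReal.coe_nonneg.mpr (ht i)
  refine add_nonneg (add_nonneg (add_nonneg ?_ ?_) ?_) ?_
  · exact mul_nonneg (ht' 0)
      (relEnt_nonneg μ.Qm_nonneg ν.Qm_nonneg (by rw [μ.sum_Qm, ν.sum_Qm]))
  · exact mul_nonneg (ht' 1) (condRelEnt_nonneg μ.nonneg ν.Wc_nonneg ν.sum_Wc_le_one)
  · exact mul_nonneg (ht' 2)
      (relEnt_nonneg μ.Tm_nonneg ν.Tm_nonneg (by rw [μ.sum_Tm, ν.sum_Tm]))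
  · exact mul_nonneg (ht' 3)
      (condRelEnt_nonneg (fun y x => μ.nonneg x y) ν.Vc_nonneg ν.sum_Vc_le_one)

end JointDist

section MutInfo

variable [Fintype X] [Fintype Y]

lemma mutInfo_nonneg (μ : JointDist X Y) : 0 ≤ mutInfo μ := by
  have hprod : ∑ x, ∑ y, μ.Qm x * μ.Tm y = 1 := by
    simp only [← Finset.mul_sum, μ.sum_Tm, mul_one]; exact μ.sum_one
  calc (0 : ℝ) = ∑ x, ∑ y, (μ.p x y - μ.Qm x * μ.Tm y) := by
        simp only [Finset.sum_sub_distrib, hprod, μ.sum_one, sub_self]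
    _ ≤ mutInfo μ := Finset.sum_le_sum fun x _ => Finset.sum_le_sum fun y _ =>
        sub_le_klSummand (μ.nonneg x y) (mul_nonneg (μ.Qm_nonneg x) (μ.Tm_nonneg y))
          fun h => by
            rcases mul_eq_zero.mp h with h | h
            exacts [le_antisymm (h ▸ μ.p_le_Qm x y) (μ.nonneg x y),
              le_antisymm (h ▸ μ.p_le_Tm x y) (μ.nonneg x y)]

/-- `H(Q) + H(T) - H(QW)`, written for an arbitrary array so that it is visibly continuous. -/
noncomputable def mutInfoExt (g : X × Y → ℝ) : ℝ :=
  ∑ z, g z * log (g z) - ∑ x, (∑ y, g (x, y)) * log (∑ y, g (x, y))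
    - ∑ y, (∑ x, g (x, y)) * log (∑ x, g (x, y))

lemma continuous_mutInfoExt : Continuous (mutInfoExt : (X × Y → ℝ) → ℝ) := by
  unfold mutInfoExt
  refine .sub (.sub ?_ ?_) ?_ <;>
    exact continuous_finsetSum _ fun _ _ => Real.continuous_mul_log.comp (by fun_prop)

lemma mutInfo_eq_mutInfoExt (μ : JointDist X Y) :
    mutInfo μ = mutInfoExt fun z => μ.p z.1 z.2 := by
  have hterm : ∀ x y, (if μ.p x y = 0 then 0
      else μ.p x y * log (μ.p x y / (μ.Qm x * μ.Tm y)))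
      = μ.p x y * log (μ.p x y) - μ.p x y * log (μ.Qm x) - μ.p x y * log (μ.Tm y) := by
    intro x y
    split_ifs with h
    · simp [h]
    · have hp : 0 < μ.p x y := (μ.nonneg x y).lt_of_ne' h
      rw [log_div h (mul_pos (hp.trans_le (μ.p_le_Qm x y)) (hp.trans_le (μ.p_le_Tm x y))).ne',
        log_mul (hp.trans_le (μ.p_le_Qm x y)).ne' (hp.trans_le (μ.p_le_Tm x y)).ne']
      ring
  have hQ : ∀ x, ∑ y, μ.p x y * log (μ.Qm x) = μ.Qm x * log (μ.Qm x) :=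
    fun x => (Finset.sum_mul _ _ _).symm
  have hT : ∑ x, ∑ y, μ.p x y * log (μ.Tm y) = ∑ y, μ.Tm y * log (μ.Tm y) := by
    rw [Finset.sum_comm]; exact Finset.sum_congr rfl fun y _ => (Finset.sum_mul _ _ _).symm
  simp only [mutInfo, mutInfoExt, hterm, Finset.sum_sub_distrib, hQ, hT, Fintype.sum_prod_type]
  rfl

end MutInfo

section FslopeExt

variable [Fintype X] [Fintype Y]

lemma LowerSemicontinuous.klTerm {E : Type*} [TopologicalSpace E] {a b : E → ℝ}
    (ha : Continuous a) (hb : Continuous b) : LowerSemicontinuous fun e => klTerm (a e) (b e) :=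
  lowerSemicontinuous_klTerm.comp (ha.prodMk hb)

/-- `Fslope` in terms of the joint pmf `g = QW` alone, with each divergence written as a sum of
`klTerm`s of continuous functions of `g`. -/
noncomputable def fslopeExt (P : X → Y → ℝ) (t : Fin 4 → ℝ) (f : X → ℝ) (ρ η : ℝ)
    (ν : JointDist X Y) (g : X × Y → ℝ) : EReal :=
  ∑ z, klTerm (g z) ((∑ y, g (z.1, y)) * P z.1 z.2)
  + ((η * ∑ x, (∑ y, g (x, y)) * f x - ρ * mutInfoExt g : ℝ) : EReal)
  + ∑ x, klTerm ((1 - ρ) * t 0 * ∑ y, g (x, y)) ((1 - ρ) * t 0 * ν.Qm x)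
  + ∑ z, klTerm ((1 - ρ) * t 1 * g z) ((1 - ρ) * t 1 * ((∑ y, g (z.1, y)) * ν.Wc z.1 z.2))
  + ∑ y, klTerm ((1 - ρ) * t 2 * ∑ x, g (x, y)) ((1 - ρ) * t 2 * ν.Tm y)
  + ∑ z : Y × X, klTerm ((1 - ρ) * t 3 * g (z.2, z.1))
      ((1 - ρ) * t 3 * ((∑ x, g (x, z.1)) * ν.Vc z.1 z.2))

lemma lowerSemicontinuous_fslopeExt (P : X → Y → ℝ) (t : Fin 4 → ℝ) (f : X → ℝ) (ρ η : ℝ)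
    (ν : JointDist X Y) : LowerSemicontinuous (fslopeExt P t f ρ η ν) := by
  have hmid : Continuous fun g : X × Y → ℝ =>
      η * ∑ x, (∑ y, g (x, y)) * f x - ρ * mutInfoExt g := by
    have := continuous_mutInfoExt (X := X) (Y := Y); fun_prop
  refine ((((LowerSemicontinuous.ereal_add ?_
    (continuous_coe_real_ereal.comp hmid).lowerSemicontinuous).ereal_add ?_).ereal_add
      ?_).ereal_add ?_).ereal_add ?_ <;>
    exact lowerSemicontinuous_ereal_sum _ fun _ _ => .klTerm (by fun_prop) (by fun_prop)

lemma fslopeExt_eq_Fslope {P : X → Y → ℝ} (hP : ∀ x y, 0 ≤ P x y) {t : Fin 4 → ℝ}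
    (ht : ∀ i, 0 ≤ t i) (f : X → ℝ) {ρ : ℝ} (η : ℝ) (hρ : ρ ≤ 1) (ν μ : JointDist X Y) :
    fslopeExt P t f ρ η ν (fun z => μ.p z.1 z.2) = Fslope P t f ρ η μ ν := by
  have hc : ∀ i, 0 ≤ (1 - ρ) * t i := fun i => mul_nonneg (by linarith) (ht i)
  have hcoe : ∀ i (r : EReal),
      (((1 - ρ) * t i : ℝ) : EReal) * r = ((1 - ρ : ℝ) : EReal) * ((t i : EReal) * r) :=
    fun i r => by rw [EReal.coe_mul, mul_assoc]
  have hdistrib : ∀ a b : EReal, ((1 - ρ : ℝ) : EReal) * (a + b)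
      = ((1 - ρ : ℝ) : EReal) * a + ((1 - ρ : ℝ) : EReal) * b :=
    EReal.left_distrib_of_nonneg_of_ne_top (EReal.coe_nonneg.mpr (by linarith))
      (EReal.coe_ne_top _)
  have hp : ∀ z : X × Y, 0 ≤ μ.p z.1 z.2 := fun z => μ.nonneg _ _
  have hp' : ∀ z : Y × X, 0 ≤ μ.p z.2 z.1 := fun z => μ.nonneg _ _
  have hQ : ∀ x, ∑ y, μ.p x y = μ.Qm x := fun _ => rfl
  have hT : ∀ y, ∑ x, μ.p x y = μ.Tm y := fun _ => rfl
  simp only [fslopeExt, hQ, hT, show ∑ x, μ.Qm x * f x = expCost f μ from rfl]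
  rw [sum_klTerm_eq_relEnt hp fun z => mul_nonneg (μ.Qm_nonneg _) (hP _ _), ← μ.condRelEnt_Wc,
    sum_klTerm_const_mul (hc 0) μ.Qm_nonneg ν.Qm_nonneg,
    sum_klTerm_const_mul (hc 1) hp fun z => mul_nonneg (μ.Qm_nonneg _) (ν.Wc_nonneg _ _),
    ← μ.condRelEnt_Wc, sum_klTerm_const_mul (hc 2) μ.Tm_nonneg ν.Tm_nonneg,
    sum_klTerm_const_mul (hc 3) hp' fun z => mul_nonneg (μ.Tm_nonneg _) (ν.Vc_nonneg _ _),
    ← μ.condRelEnt_Vc, ← mutInfo_eq_mutInfoExt, hcoe 0, hcoe 1, hcoe 2, hcoe 3]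
  have hreal : ∀ D : EReal, D - ((ρ * mutInfo μ : ℝ) : EReal) + ((η * expCost f μ : ℝ) : EReal)
      = D + ((η * expCost f μ - ρ * mutInfo μ : ℝ) : EReal) := fun D => by
    rw [sub_eq_add_neg, ← EReal.coe_neg, add_assoc, ← EReal.coe_add, neg_add_eq_sub]
  unfold Fslope Dt condDivP
  rw [hdistrib, hdistrib, hdistrib, hreal]
  abel

end FslopeExt

section SupportingPlane

variable [Fintype X] [Fintype Y] {P : X → Y → ℝ} {t : Fin 4 → ℝ} {f : X → ℝ} {ρ η : ℝ}
  {ν : JointDist X Y}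

lemma exists_Fslope_eq_E0 (hP : ∀ x y, 0 ≤ P x y) (ht : ∀ i, 0 ≤ t i) (hρ : ρ ≤ 1)
    (hE0 : E0 P t f ρ η ν ≠ ⊤) : ∃ μ, Fslope P t f ρ η μ ν = E0 P t f ρ η ν := by
  obtain ⟨μ₀⟩ : Nonempty (JointDist X Y) := by
    by_contra h
    exact hE0 (by simp [E0, Set.range_eq_empty_iff.mpr (not_nonempty_iff.mp h)])
  have hmem : ∀ μ : JointDist X Y, (fun z => μ.p z.1 z.2) ∈ stdSimplex ℝ (X × Y) := fun μ =>
    ⟨fun z => μ.nonneg _ _, by rw [Fintype.sum_prod_type]; exact μ.sum_one⟩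
  obtain ⟨g, hg, hmin⟩ := LowerSemicontinuousOn.exists_isMinOn ⟨_, hmem μ₀⟩
    (isCompact_stdSimplex ℝ (X × Y))
    ((lowerSemicontinuous_fslopeExt P t f ρ η ν).lowerSemicontinuousOn _)
  let μ : JointDist X Y :=
    ⟨fun x y => g (x, y), fun x y => hg.1 _, by rw [← Fintype.sum_prod_type]; exact hg.2⟩
  refine ⟨μ, le_antisymm (le_sInf ?_) (sInf_le ⟨μ, rfl⟩)⟩
  rintro _ ⟨μ', rfl⟩
  dsimp only
  rw [← fslopeExt_eq_Fslope hP ht f η hρ, ← fslopeExt_eq_Fslope hP ht f η hρ]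
  exact hmin (hmem μ')

lemma condDivP_eq_top_or_coe (P : X → Y → ℝ) (μ : JointDist X Y) :
    condDivP P μ = ⊤ ∨ ∃ d : ℝ, condDivP P μ = d := by
  unfold condDivP condRelEnt
  split_ifs
  exacts [.inr ⟨_, rfl⟩, .inl rfl]

lemma exists_coe_of_F1_ne_top (ht : ∀ i, 0 ≤ t i) {μ : JointDist X Y} (h : F1 P t μ ν ≠ ⊤) :
    ∃ d dt : ℝ, condDivP P μ = d ∧ Dt t μ ν = dt ∧ 0 ≤ dt := by
  have hDt := μ.Dt_nonneg ht ν
  have hDt_bot : Dt t μ ν ≠ ⊥ := ne_bot_of_le_ne_bot EReal.zero_ne_bot hDt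
  rcases condDivP_eq_top_or_coe P μ with hd | ⟨d, hd⟩
  · exact absurd (by rw [F1, hd, EReal.top_add_of_ne_bot hDt_bot]) h
  have hDt_top : Dt t μ ν ≠ ⊤ := fun h' => h (by rw [F1, hd, h', EReal.coe_add_top])
  exact ⟨d, _, hd, (EReal.coe_toReal hDt_top hDt_bot).symm, EReal.toReal_nonneg hDt⟩

lemma Fslope_eq_top_of_F1_eq_top (ht : ∀ i, 0 ≤ t i) (hρ : ρ < 1) {μ : JointDist X Y}
    (h : F1 P t μ ν = ⊤) : Fslope P t f ρ η μ ν = ⊤ := by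
  have hDt := μ.Dt_nonneg ht ν
  rcases condDivP_eq_top_or_coe P μ with hd | ⟨d, hd⟩
  · rw [Fslope, hd, EReal.top_sub_coe, EReal.top_add_coe]
    exact EReal.top_add_of_ne_bot (ne_bot_of_le_ne_bot EReal.zero_ne_bot
      (mul_nonneg (EReal.coe_nonneg.mpr (by linarith)) hDt))
  · have hDt_top : Dt t μ ν = ⊤ := by
      by_contra hne
      rw [F1, hd, ← EReal.coe_toReal hne (ne_bot_of_le_ne_bot EReal.zero_ne_bot hDt),
        ← EReal.coe_add] at h
      exact EReal.coe_ne_top _ h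
    rw [Fslope, hd, hDt_top, EReal.coe_mul_top_of_pos (by linarith)]
    exact EReal.add_top_of_ne_bot (by norm_cast; exact EReal.coe_ne_bot _)

lemma Fslope_eq_coe {μ : JointDist X Y} {d dt : ℝ} (hd : condDivP P μ = d)
    (hdt : Dt t μ ν = dt) :
    Fslope P t f ρ η μ ν
      = ((d - ρ * mutInfo μ + η * expCost f μ + (1 - ρ) * dt : ℝ) : EReal) := by
  rw [Fslope, hd, hdt]; norm_cast

lemma Fr_eq_coe {μ : JointDist X Y} {d dt : ℝ} (R : ℝ) (hd : condDivP P μ = d)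
    (hdt : Dt t μ ν = dt) : Fr P t R μ ν = ((max (d + dt) (d - mutInfo μ + R) : ℝ) : EReal) := by
  rw [Fr, F1, F2, hd, hdt]; norm_cast

lemma Fslope_add_le_Fr (ht : ∀ i, 0 ≤ t i) (hρ₀ : 0 ≤ ρ) (hρ₁ : ρ ≤ 1) (hη : 0 ≤ η) (R : ℝ)
    {α : ℝ} {μ : JointDist X Y} (hμ : expCost f μ ≤ α) :
    Fslope P t f ρ η μ ν + ((ρ * R - η * α : ℝ) : EReal) ≤ Fr P t R μ ν := by
  by_cases h : F1 P t μ ν = ⊤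
  · simp [Fr, h]
  obtain ⟨d, dt, hd, hdt, -⟩ := exists_coe_of_F1_ne_top ht h
  rw [Fslope_eq_coe hd hdt, Fr_eq_coe R hd hdt, ← EReal.coe_add, EReal.coe_le_coe_iff]
  nlinarith [mul_le_mul_of_nonneg_left (le_max_left (d + dt) (d - mutInfo μ + R))
      (sub_nonneg.mpr hρ₁),
    mul_le_mul_of_nonneg_left (le_max_right (d + dt) (d - mutInfo μ + R)) hρ₀,
    mul_le_mul_of_nonneg_left hμ hη]

lemma E0_add_le_Ec (ht : ∀ i, 0 ≤ t i) (hρ₀ : 0 ≤ ρ) (hρ₁ : ρ ≤ 1) (hη : 0 ≤ η) (R α : ℝ) :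
    E0 P t f ρ η ν + ((ρ * R - η * α : ℝ) : EReal) ≤ Ec P t f R α ν := by
  refine le_sInf ?_
  rintro _ ⟨μ, hμ, rfl⟩
  calc E0 P t f ρ η ν + ((ρ * R - η * α : ℝ) : EReal)
      ≤ Fslope P t f ρ η μ ν + ((ρ * R - η * α : ℝ) : EReal) := by
        gcongr; exact sInf_le (Set.mem_range_self μ)
    _ ≤ Fr P t R μ ν := Fslope_add_le_Fr ht hρ₀ hρ₁ hη R hμ

lemma exists_le_expCost (f : X → ℝ) (μ : JointDist X Y) : ∃ x, f x ≤ expCost f μ := by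
  have : (Finset.univ : Finset X).Nonempty := by
    by_contra h
    simpa [Finset.not_nonempty_iff_eq_empty.mp h] using μ.sum_one
  obtain ⟨x₀, -, hx₀⟩ := Finset.exists_min_image Finset.univ f this
  refine ⟨x₀, ?_⟩
  calc f x₀ = ∑ x, μ.Qm x * f x₀ := by rw [← Finset.sum_mul, μ.sum_Qm, one_mul]
    _ ≤ expCost f μ := Finset.sum_le_sum fun x _ =>
        mul_le_mul_of_nonneg_left (hx₀ x (Finset.mem_univ x)) (μ.Qm_nonneg x)

end SupportingPlane

theorem stmt12_general {X Y : Type} [Fintype X] [Fintype Y]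
    (P : X → Y → ℝ) (hP : ∀ x y, 0 ≤ P x y)
    (t : Fin 4 → ℝ) (ht : ∀ i, 0 ≤ t i)
    (f : X → ℝ) (ρ η : ℝ) (hρ0 : 0 ≤ ρ) (hρ1 : ρ < 1) (hη : 0 ≤ η)
    (ν : JointDist X Y)
    (hfin : E0 P t f ρ η ν ≠ ⊤ ∧ E0 P t f ρ η ν ≠ ⊥) :
    ∃ R α : ℝ, 0 ≤ R ∧ (∃ x, f x ≤ α) ∧
      Ec P t f R α ν = E0 P t f ρ η ν + ((ρ * R - η * α : ℝ) : EReal) := by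
  obtain ⟨μ, hμ⟩ := exists_Fslope_eq_E0 hP ht hρ1.le hfin.1
  obtain ⟨d, dt, hd, hdt, hdt0⟩ := exists_coe_of_F1_ne_top ht fun h =>
    hfin.1 (hμ ▸ Fslope_eq_top_of_F1_eq_top ht hρ1 h)
  refine ⟨mutInfo μ + dt, expCost f μ, add_nonneg (mutInfo_nonneg μ) hdt0,
    exists_le_expCost f μ, le_antisymm ?_ (E0_add_le_Ec ht hρ0 hρ1.le hη _ _)⟩
  calc Ec P t f (mutInfo μ + dt) (expCost f μ) ν ≤ Fr P t (mutInfo μ + dt) μ ν :=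
        sInf_le ⟨μ, le_refl (expCost f μ), rfl⟩
    _ = _ := by
      rw [Fr_eq_coe _ hd hdt, ← hμ, Fslope_eq_coe hd hdt, ← EReal.coe_add,
        show d - mutInfo μ + (mutInfo μ + dt) = d + dt by ring, max_self]
      ring_nf

/-- Tightness of the supporting plane: if `E₀^t(ρ, η, Q̃W̃)` is finite, there
exist `R ≥ 0` and `α ≥ min_x f(x)` with
`E_c^t(Q̃W̃, R, α) = E₀^t(ρ, η, Q̃W̃) + ρR − ηα`. -/
theorem stmt12 {X Y : Type} [Fintype X] [Fintype Y]
    (P : X → Y → ℝ) (hP : ∀ x y, 0 ≤ P x y) (hPsum : ∀ x, ∑ y : Y, P x y = 1)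
    (t : Fin 4 → ℝ) (ht : ∀ i, 0 ≤ t i)
    (f : X → ℝ) (ρ η : ℝ) (hρ0 : 0 ≤ ρ) (hρ1 : ρ < 1) (hη : 0 ≤ η)
    (ν : JointDist X Y)
    (hfin : E0 P t f ρ η ν ≠ ⊤ ∧ E0 P t f ρ η ν ≠ ⊥) :
    ∃ R α : ℝ, 0 ≤ R ∧ (∃ x, f x ≤ α) ∧
      Ec P t f R α ν = E0 P t f ρ η ν + ((ρ * R - η * α : ℝ) : EReal) :=
  stmt12_general P hP t ht f ρ η hρ0 hρ1 hη ν hfin
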